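/- arXiv:2004.10798 — 4 statements merged into one kernel-verified Lean document; each statement's English description precedes it below -/
import Mathlib

section
/- Let (Ω, ℱ, P) be a probability space and let (V_ℓ)_{ℓ ∈ ℕ} be a sequence of independent real-valued random variables with 0 ≤ V_ℓ ≤ 1 almost surely and ∑_{ℓ=0}^∞ E[V_ℓ] = ∞. Then the residual products R_n = ∏_{l < n} (1 − V_l) converge to 0 almost surely as n → ∞. Consequently, the stick-breaking weights π_ℓ = V_ℓ ∏_{l < ℓ} (1 − V_l) satisfy ∑_{ℓ=0}^∞ π_ℓ = 1 almost surely. -/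
/-!
By independence, `E[∏_{l<n} (1 - V l)] = ∏_{l<n} (1 - E[V l]) ≤ exp (-∑_{l<n} E[V l]) → 0`.
The residual products are almost surely nonnegative and nonincreasing in `n`, so their
integrals tending to `0` forces them to tend to `0` almost surely. The partial sums of the
stick-breaking weights telescope to `1 - ∏_{l<n} (1 - V l)`, hence the weights sum to one.
-/

open MeasureTheory Filter Finset

theorem sum_range_stick_breaking (v : ℕ → ℝ) (n : ℕ) :
    ∑ ℓ ∈ range n, v ℓ * ∏ l ∈ range ℓ, (1 - v l) = 1 - ∏ l ∈ range n, (1 - v l) := by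
  induction n with
  | zero => simp
  | succ n ih =>
    rw [sum_range_succ, prod_range_succ, ih]
    ring

section UnitInterval

variable {v : ℕ → ℝ} (h0 : ∀ l, 0 ≤ v l) (h1 : ∀ l, v l ≤ 1)
include h0 h1

theorem antitone_prod_range_one_sub : Antitone fun n ↦ ∏ l ∈ range n, (1 - v l) :=
  antitone_nat_of_succ_le fun n ↦ by
    rw [prod_range_succ]
    exact mul_le_of_le_one_right (prod_nonneg fun l _ ↦ sub_nonneg.2 (h1 l))
      (sub_le_self _ (h0 n))

theorem prod_range_one_sub_mem_Icc (n : ℕ) : ∏ l ∈ range n, (1 - v l) ∈ Set.Icc 0 1 :=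
  ⟨prod_nonneg fun l _ ↦ sub_nonneg.2 (h1 l),
    by simpa using antitone_prod_range_one_sub h0 h1 n.zero_le⟩

theorem tendsto_prod_range_one_sub_of_not_summable (hv : ¬ Summable v) :
    Tendsto (fun n ↦ ∏ l ∈ range n, (1 - v l)) atTop (nhds 0) := by
  have hsum : Tendsto (fun n ↦ ∑ l ∈ range n, v l) atTop atTop :=
    (not_summable_iff_tendsto_nat_atTop_of_nonneg h0).1 hv
  have hexp : Tendsto (fun n ↦ Real.exp (-∑ l ∈ range n, v l)) atTop (nhds 0) :=
    Real.tendsto_exp_atBot.comp (tendsto_neg_atTop_atBot.comp hsum)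
  refine squeeze_zero (fun n ↦ prod_nonneg fun l _ ↦ sub_nonneg.2 (h1 l)) (fun n ↦ ?_) hexp
  rw [← sum_neg_distrib, Real.exp_sum]
  exact prod_le_prod (fun l _ ↦ sub_nonneg.2 (h1 l)) fun l _ ↦ Real.one_sub_le_exp_neg _

theorem hasSum_stick_breaking_of_tendsto
    (hv : Tendsto (fun n ↦ ∏ l ∈ range n, (1 - v l)) atTop (nhds 0)) :
    HasSum (fun ℓ ↦ v ℓ * ∏ l ∈ range ℓ, (1 - v l)) 1 := by
  refine (hasSum_iff_tendsto_nat_of_nonneg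
    (fun ℓ ↦ mul_nonneg (h0 ℓ) (prod_nonneg fun l _ ↦ sub_nonneg.2 (h1 l))) 1).2 ?_
  simp only [sum_range_stick_breaking]
  simpa using hv.const_sub 1

end UnitInterval

namespace ProbabilityTheory

variable {Ω : Type*} [MeasurableSpace Ω] {P : Measure Ω}

theorem iIndepFun.integral_finset_prod_eq_prod_integral {ι 𝕜 : Type*} [RCLike 𝕜]
    {X : ι → Ω → 𝕜} (hX : iIndepFun X P) (mX : ∀ i, AEStronglyMeasurable (X i) P)
    (s : Finset ι) : ∫ ω, ∏ i ∈ s, X i ω ∂P = ∏ i ∈ s, ∫ ω, X i ω ∂P := by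
  simp_rw [← s.prod_coe_sort]
  exact (hX.precomp Subtype.val_injective).integral_fun_prod_eq_prod_integral fun i ↦ mX i

variable [IsProbabilityMeasure P] {V : ℕ → Ω → ℝ}

theorem integral_prod_range_one_sub (hindep : iIndepFun V P) (hV : ∀ ℓ, Integrable (V ℓ) P)
    (n : ℕ) :
    ∫ ω, ∏ l ∈ range n, (1 - V l ω) ∂P = ∏ l ∈ range n, (1 - ∫ ω, V l ω ∂P) := by
  have hindep' : iIndepFun (fun l ω ↦ 1 - V l ω) P :=
    hindep.comp (fun _ x ↦ 1 - x) fun _ ↦ measurable_const.sub measurable_id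
  rw [hindep'.integral_finset_prod_eq_prod_integral
    fun l ↦ ((integrable_const 1).sub (hV l)).aestronglyMeasurable]
  refine prod_congr rfl fun l _ ↦ ?_
  rw [integral_sub (integrable_const 1) (hV l), integral_const, probReal_univ, one_smul]

theorem ae_tendsto_prod_range_one_sub_of_not_summable
    (hmeas : ∀ ℓ, AEMeasurable (V ℓ) P) (hindep : iIndepFun V P)
    (h01 : ∀ ℓ, ∀ᵐ ω ∂P, 0 ≤ V ℓ ω ∧ V ℓ ω ≤ 1)
    (hdiv : ¬ Summable fun ℓ ↦ ∫ ω, V ℓ ω ∂P) :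
    ∀ᵐ ω ∂P, Tendsto (fun n ↦ ∏ l ∈ range n, (1 - V l ω)) atTop (nhds 0) := by
  have h01_all : ∀ᵐ ω ∂P, ∀ ℓ, 0 ≤ V ℓ ω ∧ V ℓ ω ≤ 1 := ae_all_iff.2 h01
  have hint : ∀ ℓ, Integrable (V ℓ) P := fun ℓ ↦ .of_mem_Icc 0 1 (hmeas ℓ) (h01 ℓ)
  have hprod_mem : ∀ᵐ ω ∂P, ∀ n, ∏ l ∈ range n, (1 - V l ω) ∈ Set.Icc 0 1 := by
    filter_upwards [h01_all] with ω hω n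
    exact prod_range_one_sub_mem_Icc (fun l ↦ (hω l).1) (fun l ↦ (hω l).2) n
  have hprod_int : ∀ n, Integrable (fun ω ↦ ∏ l ∈ range n, (1 - V l ω)) P := fun n ↦
    .of_mem_Icc 0 1 (aemeasurable_fun_prod _ fun l _ ↦ aemeasurable_const.sub (hmeas l))
      (by filter_upwards [hprod_mem] with ω hω using hω n)
  have hmean : Tendsto (fun n ↦ ∫ ω, ∏ l ∈ range n, (1 - V l ω) ∂P) atTop
      (nhds (∫ _, 0 ∂P)) := by
    simp only [integral_prod_range_one_sub hindep hint, integral_zero]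
    refine tendsto_prod_range_one_sub_of_not_summable (fun ℓ ↦ integral_nonneg_of_ae ?_)
      (fun ℓ ↦ ?_) hdiv
    · filter_upwards [h01 ℓ] with ω hω using hω.1
    · refine (integral_mono_ae (hint ℓ) (integrable_const 1) ?_).trans_eq (by simp)
      filter_upwards [h01 ℓ] with ω hω using hω.2
  refine tendsto_of_integral_tendsto_of_antitone hprod_int (integrable_zero _ _ _) hmean ?_ ?_
  · filter_upwards [h01_all] with ω hω
    exact antitone_prod_range_one_sub (fun l ↦ (hω l).1) (fun l ↦ (hω l).2)
  · filter_upwards [hprod_mem] with ω hω n using (hω n).1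

end ProbabilityTheory

/-- For independent `[0,1]`-valued stick proportions with divergent sum of
expectations, the residual products `∏_{l<n} (1 − V l)` tend to `0` almost
surely, and hence the stick-breaking weights `π ℓ = V ℓ ∏_{l<ℓ} (1 − V l)`
sum to one almost surely. -/
theorem stick_breaking_total_mass_one
    {Ω : Type*} [MeasurableSpace Ω] (P : Measure Ω) [IsProbabilityMeasure P]
    (V : ℕ → Ω → ℝ)
    (hmeas : ∀ ℓ, Measurable (V ℓ))
    (hindep : ProbabilityTheory.iIndepFun V P)
    (h01 : ∀ ℓ, ∀ᵐ ω ∂P, 0 ≤ V ℓ ω ∧ V ℓ ω ≤ 1)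
    (hdiv : ¬ Summable (fun ℓ => ∫ ω, V ℓ ω ∂P)) :
    (∀ᵐ ω ∂P,
        Tendsto (fun n => ∏ l ∈ Finset.range n, (1 - V l ω)) atTop (nhds 0))
      ∧ (∀ᵐ ω ∂P,
          ∑' ℓ, V ℓ ω * ∏ l ∈ Finset.range ℓ, (1 - V l ω) = 1) := by
  have hresidual := ProbabilityTheory.ae_tendsto_prod_range_one_sub_of_not_summable
    (fun ℓ ↦ (hmeas ℓ).aemeasurable) hindep h01 hdiv
  refine ⟨hresidual, ?_⟩
  filter_upwards [hresidual, ae_all_iff.2 h01] with ω hω h01ω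
  exact (hasSum_stick_breaking_of_tendsto (fun l ↦ (h01ω l).1) (fun l ↦ (h01ω l).2) hω).tsum_eq
end

section
/- Let α > 0 and d ∈ (0,1) be real numbers. Define the sequence (a_n)_{n ≥ 1} of real numbers by a_1 = 1 and a_{n+1} = a_n + (α + d·a_n)/(α + n). Then for every n ≥ 1, a_n = (Γ(α + d + n) · Γ(α + 1)) / (d · Γ(α + n) · Γ(α + d)) − α/d, where Γ denotes the Gamma function. -/
open Real

/-! Shifting by `α / d` turns the affine recursion into the multiplicative one
`b_{n+1} = (α + n + d) / (α + n) · b_n`, whose solution is a constant multiple of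
`Γ(α + d + n) / Γ(α + n)` because of the functional equation `Γ(x + 1) = x Γ(x)`. -/

theorem Real.Gamma_add_add_one_div_Gamma_add_one {x d : ℝ} (hx : x ≠ 0) (hxd : x + d ≠ 0) :
    Gamma (x + d + 1) / Gamma (x + 1) = (x + d) / x * (Gamma (x + d) / Gamma x) := by
  rw [Gamma_add_one hxd, Gamma_add_one hx, mul_div_mul_comm]

theorem add_div_eq_mul_add_div_of_eq_add_div {α d x y t : ℝ} (hd : d ≠ 0) (ht : α + t ≠ 0)
    (hy : y = x + (α + d * x) / (α + t)) :
    y + α / d = (α + t + d) / (α + t) * (x + α / d) := by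
  rw [hy]
  field_simp
  ring

theorem pitman_yor_expected_clusters_closed_form_general
    (α d : ℝ) (hα : 0 < α) (hd0 : 0 < d)
    (a : ℕ → ℝ) (ha1 : a 1 = 1)
    (harec : ∀ n : ℕ, 1 ≤ n → a (n + 1) = a n + (α + d * a n) / (α + n)) :
    ∀ n : ℕ, 1 ≤ n →
      a n = Real.Gamma (α + d + n) * Real.Gamma (α + 1)
              / (d * Real.Gamma (α + n) * Real.Gamma (α + d)) - α / d := by
  have hshift : ∀ n ≥ 1,
      a n + α / d = Gamma (α + 1) / (d * Gamma (α + d)) * (Gamma (α + d + n) / Gamma (α + n)) := by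
    intro n hn
    induction n, hn using Nat.le_induction with
    | base =>
      have hΓd : Gamma (α + d) ≠ 0 := (Gamma_pos_of_pos (by positivity)).ne'
      rw [ha1, Nat.cast_one, Gamma_add_one (s := α + d) (by positivity)]
      field_simp
      ring
    | succ n hn ih =>
      have hαn : α + n ≠ 0 := by positivity
      rw [add_div_eq_mul_add_div_of_eq_add_div hd0.ne' hαn (harec n hn), ih, Nat.cast_succ,
        ← add_assoc, ← add_assoc, add_right_comm α d,
        Gamma_add_add_one_div_Gamma_add_one hαn (by positivity)]
      ring
  intro n hn
  rw [eq_sub_iff_add_eq, hshift n hn]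
  ring

/-- Closed form for the expected number of clusters of the Pitman–Yor
process: the solution of the recursion `a₁ = 1`,
`a_{n+1} = a_n + (α + d a_n)/(α + n)` is
`a_n = Γ(α+d+n) Γ(α+1) / (d Γ(α+n) Γ(α+d)) − α/d`. -/
theorem pitman_yor_expected_clusters_closed_form
    (α d : ℝ) (hα : 0 < α) (hd0 : 0 < d) (hd1 : d < 1)
    (a : ℕ → ℝ) (ha1 : a 1 = 1)
    (harec : ∀ n : ℕ, 1 ≤ n → a (n + 1) = a n + (α + d * a n) / (α + n)) :
    ∀ n : ℕ, 1 ≤ n →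
      a n = Real.Gamma (α + d + n) * Real.Gamma (α + 1)
              / (d * Real.Gamma (α + n) * Real.Gamma (α + d)) - α / d :=
  pitman_yor_expected_clusters_closed_form_general α d hα hd0 a ha1 harec
end

section
/- Let α > 0 and d ∈ (0,1) be real numbers. Define the sequence (a_n)_{n ≥ 1} of real numbers by a_1 = 1 and a_{n+1} = a_n + (α + d·a_n)/(α + n). Then a_n / n^d → Γ(α + 1) / (d · Γ(α + d)) as n → ∞, where Γ denotes the Gamma function; in particular the expected number of clusters of the Pitman–Yor model follows a power law of order n^d in the number n of objects. -/
/-!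
Shifting by the fixed point of the affine recursion, `b n = a n + α / d` satisfies
`b (n + 1) = b n * (α + d + n) / (α + n)`, so `b n = (α / d) ∏_{k<n} (α + d + k) / (α + k)`.
Writing such products through Euler's sequence `GammaSeq`, Euler's limit formula gives
`∏_{k<n} (t + k) / (s + k) ~ Γ(s) / Γ(t) · n ^ (t - s)`, and `(α / d) Γ(α) = Γ(α + 1) / d`.
-/

open Finset Filter Topology Real

lemma ne_neg_natCast_of_pos {s : ℝ} (hs : 0 < s) (m : ℕ) : s ≠ -m := by
  have : (0 : ℝ) ≤ m := m.cast_nonneg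
  linarith

lemma add_natCast_ne_zero {s : ℝ} (hs : ∀ m : ℕ, s ≠ -m) (k : ℕ) : s + k ≠ 0 := by
  simpa [add_eq_zero_iff_eq_neg] using hs k

theorem prod_range_add_div_add_eq_rpow_mul_GammaSeq_div {s t : ℝ} (hs : ∀ m : ℕ, s ≠ -m)
    (ht : ∀ m : ℕ, t ≠ -m) {n : ℕ} (hn : n ≠ 0) :
    ∏ k ∈ range (n + 1), (t + k) / (s + k) = (n : ℝ) ^ (t - s) * (GammaSeq s n / GammaSeq t n) := by
  have hpow : (n : ℝ) ^ (t - s) * (n : ℝ) ^ s = (n : ℝ) ^ t := by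
    rw [← rpow_add (by positivity), sub_add_cancel]
  have := prod_ne_zero_iff.mpr fun k (_ : k ∈ range (n + 1)) => add_natCast_ne_zero hs k
  have := prod_ne_zero_iff.mpr fun k (_ : k ∈ range (n + 1)) => add_natCast_ne_zero ht k
  have : (n.factorial : ℝ) ≠ 0 := by positivity
  have : (n : ℝ) ^ s ≠ 0 := by positivity
  have : (n : ℝ) ^ (t - s) ≠ 0 := by positivity
  rw [prod_div_distrib, GammaSeq, GammaSeq, ← hpow]
  field_simp

theorem tendsto_prod_range_add_div_add_div_rpow {s t : ℝ} (hs : ∀ m : ℕ, s ≠ -m)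
    (ht : ∀ m : ℕ, t ≠ -m) :
    Tendsto (fun n : ℕ => (∏ k ∈ range n, (t + k) / (s + k)) / (n : ℝ) ^ (t - s)) atTop
      (𝓝 (Gamma s / Gamma t)) := by
  have hGamma : Tendsto (fun n : ℕ => GammaSeq s n / GammaSeq t n * ((s + 1 * n) / (t + 1 * n)))
      atTop (𝓝 (Gamma s / Gamma t * (1 / 1))) :=
    ((GammaSeq_tendsto_Gamma s).div (GammaSeq_tendsto_Gamma t) (Gamma_ne_zero ht)).mul
      (tendsto_add_mul_div_add_mul_atTop_nhds s t 1 one_ne_zero)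
  rw [div_one, mul_one] at hGamma
  refine hGamma.congr' ((eventually_ne_atTop 0).mono fun n hn => ?_)
  have hsucc := prod_range_add_div_add_eq_rpow_mul_GammaSeq_div hs ht hn
  rw [prod_range_succ] at hsucc
  have := add_natCast_ne_zero hs n
  have := add_natCast_ne_zero ht n
  have hpow : (n : ℝ) ^ (t - s) ≠ 0 := by positivity
  simp only [one_mul]
  rw [eq_div_iff hpow]
  field_simp at hsucc ⊢
  linear_combination -hsucc

theorem pitmanYor_add_div_eq_div_mul_prod {α d : ℝ} {a : ℕ → ℝ} (hα : 0 < α) (hd : d ≠ 0)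
    (ha1 : a 1 = 1) (harec : ∀ n : ℕ, 1 ≤ n → a (n + 1) = a n + (α + d * a n) / (α + n))
    {n : ℕ} (hn : 1 ≤ n) :
    a n + α / d = α / d * ∏ k ∈ range n, (α + d + k) / (α + k) := by
  induction n, hn using Nat.le_induction with
  | base =>
    rw [ha1, prod_range_one, Nat.cast_zero, add_zero, add_zero]
    field_simp
    ring
  | succ n hn ih =>
    have : α + n ≠ 0 := by positivity
    rw [harec n hn, prod_range_succ, ← mul_assoc, ← ih]
    field_simp
    ring

theorem pitman_yor_expected_clusters_power_law_general
    (α d : ℝ) (hα : 0 < α) (hd0 : 0 < d)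
    (a : ℕ → ℝ) (ha1 : a 1 = 1)
    (harec : ∀ n : ℕ, 1 ≤ n → a (n + 1) = a n + (α + d * a n) / (α + n)) :
    Tendsto (fun n : ℕ => a n / (n : ℝ) ^ d) atTop
      (nhds (Real.Gamma (α + 1) / (d * Real.Gamma (α + d)))) := by
  have hprod := tendsto_prod_range_add_div_add_div_rpow (ne_neg_natCast_of_pos hα)
    (ne_neg_natCast_of_pos (add_pos hα hd0))
  rw [add_sub_cancel_left] at hprod
  have hinv : Tendsto (fun n : ℕ => ((n : ℝ) ^ d)⁻¹) atTop (𝓝 0) :=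
    ((tendsto_rpow_atTop hd0).comp tendsto_natCast_atTop_atTop).inv_tendsto_atTop
  have hlim := (hprod.const_mul (α / d)).sub (hinv.const_mul (α / d))
  have hL : α / d * (Gamma α / Gamma (α + d)) - α / d * 0 = Gamma (α + 1) / (d * Gamma (α + d)) := by
    rw [Gamma_add_one hα.ne']
    ring
  rw [hL] at hlim
  refine hlim.congr' ((eventually_ge_atTop 1).mono fun n hn => ?_)
  dsimp only
  rw [eq_sub_of_add_eq (pitmanYor_add_div_eq_div_mul_prod hα hd0.ne' ha1 harec hn)]
  ring

/-- Power-law growth of the expected number of clusters of the Pitman–Yor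
process: if `a₁ = 1` and `a_{n+1} = a_n + (α + d a_n)/(α + n)`, then
`a_n / n^d → Γ(α+1)/(d Γ(α+d))` as `n → ∞`. -/
theorem pitman_yor_expected_clusters_power_law
    (α d : ℝ) (hα : 0 < α) (hd0 : 0 < d) (hd1 : d < 1)
    (a : ℕ → ℝ) (ha1 : a 1 = 1)
    (harec : ∀ n : ℕ, 1 ≤ n → a (n + 1) = a n + (α + d * a n) / (α + n)) :
    Tendsto (fun n : ℕ => a n / (n : ℝ) ^ d) atTop
      (nhds (Real.Gamma (α + 1) / (d * Real.Gamma (α + d)))) :=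
  pitman_yor_expected_clusters_power_law_general α d hα hd0 a ha1 harec
end

section
/- Let α > 0 be a real number, n ≥ 1 a natural number, and let c : {0, 1, …, n−1} → ℕ be a cluster-assignment sequence in canonical order, i.e., c(0) = 0 and for each i ≥ 1, c(i) ≤ 1 + max_{j < i} c(j). For each step i, define the sequential predictive weight w_i = m_i(c(i))/(α + i) if m_i(c(i)) > 0, and w_i = α/(α + i) if m_i(c(i)) = 0, where m_i(r) = |{j < i : c(j) = r}| is the number of earlier objects assigned to cluster label r. Let D be the number of distinct labels used by c and v_1, …, v_D their final occupancy counts. Then ∏_{i=0}^{n−1} w_i = α^D · (∏_{j=1}^D (v_j − 1)!) / α^{[n]}, where α^{[n]} = α(α+1)⋯(α+n−1) is the rising factorial. In particular, the product of sequential predictive probabilities depends on the assignment sequence only through the induced partition block sizes, so the induced random partition is exchangeable with exchangeable partition probability function p(v_1, …, v_D) = α^D (∏_j (v_j − 1)!)/α^{[n]}. -/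
open Finset

/-- `crpCount c i r` is the number of the first `i` objects assigned to
cluster label `r` by the assignment sequence `c`. -/
def crpCount (c : ℕ → ℕ) (i r : ℕ) : ℕ :=
  ((Finset.range i).filter (fun j => c j = r)).card

/-- `crpWeight α c i` is the sequential predictive weight of the Chinese
restaurant process: `m/(α+i)` if the chosen cluster already contains `m > 0`
of the first `i` objects, and `α/(α+i)` if it is new. -/
noncomputable def crpWeight (α : ℝ) (c : ℕ → ℕ) (i : ℕ) : ℝ :=
  if 0 < crpCount c i (c i) then (crpCount c i (c i) : ℝ) / (α + i)
  else α / (α + i)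

/- Seating object `i` multiplies the numerator by `m` if it joins a block of current size
`m ≥ 1`, which turns that block's `(m - 1)!` into `m!`, and by `α` if it opens a new block,
which contributes `α · 0!`. Hence the product of the numerators telescopes to
`α ^ D ∏ (v_j - 1)!`, while the denominators multiply to `α (α + 1) ⋯ (α + n - 1)`. -/

lemma crpCount_succ_self (c : ℕ → ℕ) (n : ℕ) :
    crpCount c (n + 1) (c n) = crpCount c n (c n) + 1 := by
  unfold crpCount
  rw [range_add_one, filter_insert, if_pos rfl, card_insert_of_notMem (by simp)]

lemma crpCount_succ_of_ne (c : ℕ → ℕ) {n r : ℕ} (h : r ≠ c n) :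
    crpCount c (n + 1) r = crpCount c n r := by
  unfold crpCount
  rw [range_add_one, filter_insert, if_neg (Ne.symm h)]

lemma crpCount_pos_iff (c : ℕ → ℕ) (n r : ℕ) :
    0 < crpCount c n r ↔ r ∈ (range n).image c := by
  simp [crpCount, card_pos, filter_nonempty_iff, eq_comm]

lemma image_range_succ (c : ℕ → ℕ) (n : ℕ) :
    (range (n + 1)).image c = insert (c n) ((range n).image c) := by
  rw [range_add_one, image_insert]

noncomputable def crpNumerator (α : ℝ) (c : ℕ → ℕ) (i : ℕ) : ℝ :=
  if 0 < crpCount c i (c i) then (crpCount c i (c i) : ℝ) else α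

lemma crpWeight_eq_div (α : ℝ) (c : ℕ → ℕ) (i : ℕ) :
    crpWeight α c i = crpNumerator α c i / (α + i) := by
  unfold crpWeight crpNumerator
  split_ifs <;> rfl

noncomputable def eppfNumerator (α : ℝ) (c : ℕ → ℕ) (n : ℕ) : ℝ :=
  α ^ ((range n).image c).card * ∏ r ∈ (range n).image c, ((crpCount c n r - 1).factorial : ℝ)

lemma prod_factorial_crpCount_succ_erase (c : ℕ → ℕ) (n : ℕ) (S : Finset ℕ) :
    ∏ r ∈ S.erase (c n), ((crpCount c (n + 1) r - 1).factorial : ℝ)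
      = ∏ r ∈ S.erase (c n), ((crpCount c n r - 1).factorial : ℝ) :=
  prod_congr rfl fun _ hr => by rw [crpCount_succ_of_ne c (ne_of_mem_erase hr)]

lemma eppfNumerator_succ (α : ℝ) (c : ℕ → ℕ) (n : ℕ) :
    eppfNumerator α c (n + 1) = eppfNumerator α c n * crpNumerator α c n := by
  set m := crpCount c n (c n) with hm
  have hfac : ((crpCount c (n + 1) (c n) - 1).factorial : ℝ) = (m.factorial : ℝ) := by
    rw [crpCount_succ_self, Nat.add_sub_cancel]
  have hnew : c n ∈ (range (n + 1)).image c := by simp [image_range_succ]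
  unfold eppfNumerator crpNumerator
  rw [← mul_prod_erase _ _ hnew, hfac, prod_factorial_crpCount_succ_erase, image_range_succ,
    erase_insert_eq_erase]
  by_cases hpos : 0 < m
  · have hmem := (crpCount_pos_iff c n (c n)).mp hpos
    obtain ⟨k, hk⟩ := Nat.exists_eq_add_one_of_ne_zero hpos.ne'
    rw [insert_eq_of_mem hmem, ← mul_prod_erase _ _ hmem, if_pos hpos, ← hm, hk,
      Nat.add_sub_cancel, Nat.factorial_succ]
    push_cast
    ring
  · have hnot : c n ∉ (range n).image c := fun h => hpos ((crpCount_pos_iff c n (c n)).mpr h)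
    rw [card_insert_of_notMem hnot, erase_eq_of_notMem hnot, if_neg hpos,
      Nat.eq_zero_of_not_pos hpos]
    simp only [Nat.factorial_zero, Nat.cast_one, one_mul, pow_succ]
    ring

lemma prod_crpNumerator (α : ℝ) (c : ℕ → ℕ) (n : ℕ) :
    ∏ i ∈ range n, crpNumerator α c i = eppfNumerator α c n := by
  induction n with
  | zero => simp [eppfNumerator]
  | succ n ih => rw [prod_range_succ, ih, eppfNumerator_succ]

theorem crp_product_eq_eppf_general
    (α : ℝ) (n : ℕ) (c : ℕ → ℕ) :
    ∏ i ∈ Finset.range n, crpWeight α c i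
      = α ^ ((Finset.range n).image c).card
          * (∏ r ∈ (Finset.range n).image c, ((crpCount c n r - 1).factorial : ℝ))
          / ∏ i ∈ Finset.range n, (α + i) := by
  simp only [crpWeight_eq_div, prod_div_distrib, prod_crpNumerator, eppfNumerator]

/-- The product of sequential CRP predictive probabilities equals the
Dirichlet-process EPPF `α^D ∏_r (v_r − 1)! / α⁽ⁿ⁾`, where `D` is the number
of distinct labels used and the `v_r` are the final occupancy counts; in
particular it depends on the assignment sequence only through the induced
block sizes, so the induced random partition is exchangeable. -/
theorem crp_product_eq_eppf
    (α : ℝ) (hα : 0 < α) (n : ℕ) (hn : 1 ≤ n) (c : ℕ → ℕ)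
    (hc0 : c 0 = 0)
    (hcanon : ∀ i, 1 ≤ i → i < n → c i ≤ 1 + (Finset.range i).sup c) :
    ∏ i ∈ Finset.range n, crpWeight α c i
      = α ^ ((Finset.range n).image c).card
          * (∏ r ∈ (Finset.range n).image c, ((crpCount c n r - 1).factorial : ℝ))
          / ∏ i ∈ Finset.range n, (α + i) :=
  crp_product_eq_eppf_general α n c
end
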